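/- arXiv:1810.02750 — 3 statements merged into one kernel-verified Lean document; each statement's English description precedes it below -/
import Mathlib

section
/- For any frozen percolation type flow π with initial kernel a kernel κ and initial value π(0) having strictly positive entries, the limit lim_{t→∞} π(t)/Φ(t) exists in ℝ^k, where Φ(t) := ‖π(t)‖₁. -/
open Matrix

noncomputable def perronRoot {k : ℕ} (A : Matrix (Fin k) (Fin k) ℝ) : ℝ :=
  sSup ((fun z : ℂ => ‖z‖) '' spectrum ℂ (A.map Complex.ofReal))

def circ {k : ℕ} (A : Matrix (Fin k) (Fin k) ℝ) (v : Fin k → ℝ) : Matrix (Fin k) (Fin k) ℝ :=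
  Matrix.of fun i j => A i j * v j

noncomputable def l1norm {k : ℕ} (v : Fin k → ℝ) : ℝ := ∑ i, |v i|

noncomputable def kernelAt {k : ℕ} (κ : Matrix (Fin k) (Fin k) ℝ) (t : ℝ) :
    Matrix (Fin k) (Fin k) ℝ :=
  κ + t • Matrix.of (fun _ _ => (1 : ℝ))

def IsKernel {k : ℕ} (κ : Matrix (Fin k) (Fin k) ℝ) : Prop :=
  κ.IsSymm ∧ ∀ i j, 0 ≤ κ i j

structure IsTypeFlow {k : ℕ} (κ : Matrix (Fin k) (Fin k) ℝ) (π : ℝ → Fin k → ℝ)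
    (tc : ℝ) (φ : ℝ → ℝ) : Prop where
  nonneg : ∀ t ≥ (0 : ℝ), ∀ i, 0 ≤ π t i
  ne_zero : ∀ t ≥ (0 : ℝ), π t ≠ 0
  cont : ContinuousOn π (Set.Ici 0)
  tc_nonneg : 0 ≤ tc
  phi_pos : ∀ t > tc, 0 < φ t
  phi_cont : ContinuousOn φ (Set.Ioi tc)
  init : ∀ t, 0 ≤ t → t ≤ tc → π t = π 0
  crit : ∀ t ≥ tc, perronRoot (circ (kernelAt κ t) (π t)) = 1
  flowDE : ∀ t > tc, ∃ μ : Fin k → ℝ,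
      (∀ i, 0 < μ i) ∧ l1norm μ = 1 ∧
      Matrix.vecMul μ (circ (kernelAt κ t) (π t)) = μ ∧
      HasDerivAt π (-(φ t) • μ) t


/-!
Past the critical time the eigenvector equation `μ (κ(t) ∘ π) = μ` reads `πⱼ ((μκ)ⱼ + t) = μⱼ`,
so `(log πⱼ)' = -φ ((μκ)ⱼ + t)`. The term `-φ t` is the same for every type, hence
`(log πⱼ - log πᵢ)'` is bounded by a constant times `φ = -(∑ π)'`. As `∑ π` decreases and stays
nonnegative, every `log πⱼ - log πᵢ` has finite variation on `(t_c, ∞)` and converges, and so do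
the normalized coordinates `πᵢ / ∑ π = (∑ⱼ πⱼ / πᵢ)⁻¹`.
-/

open Filter Set Topology

theorem AntitoneOn.exists_tendsto_atTop_of_bddBelow {f : ℝ → ℝ} {a : ℝ}
    (hf : AntitoneOn f (Ioi a)) (hbdd : BddBelow (f '' Ioi a)) :
    ∃ L, Tendsto f atTop (𝓝 L) := by
  rw [image_eq_range] at hbdd
  exact ⟨_, tendsto_comp_val_Ioi_atTop.1 <|
    tendsto_atTop_ciInf (fun x y hxy => hf x.2 y.2 hxy) hbdd⟩

theorem antitoneOn_Ioi_of_hasDerivAt_nonpos {f f' : ℝ → ℝ} {a : ℝ}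
    (hf : ∀ t > a, HasDerivAt f (f' t) t) (hf' : ∀ t > a, f' t ≤ 0) :
    AntitoneOn f (Ioi a) :=
  antitoneOn_of_hasDerivWithinAt_nonpos (convex_Ioi a)
    (fun t ht => (hf t ht).continuousAt.continuousWithinAt)
    (fun t ht => (hf t (interior_subset ht)).hasDerivWithinAt)
    (fun t ht => hf' t (interior_subset ht))

theorem exists_tendsto_of_abs_deriv_le_neg_deriv {f g f' g' : ℝ → ℝ} {a : ℝ}
    (hf : ∀ t > a, HasDerivAt f (f' t) t) (hg : ∀ t > a, HasDerivAt g (g' t) t)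
    (hle : ∀ t > a, |f' t| ≤ -g' t) (hg_bdd : BddBelow (g '' Ioi a)) :
    ∃ L, Tendsto f atTop (𝓝 L) := by
  have hg_anti : AntitoneOn g (Ioi a) := antitoneOn_Ioi_of_hasDerivAt_nonpos hg
    fun t ht => by linarith [abs_nonneg (f' t), hle t ht]
  have hadd_anti : AntitoneOn (f + g) (Ioi a) :=
    antitoneOn_Ioi_of_hasDerivAt_nonpos (fun t ht => (hf t ht).add (hg t ht))
      fun t ht => by linarith [le_abs_self (f' t), hle t ht]
  have hsub_anti : AntitoneOn (g - f) (Ioi a) :=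
    antitoneOn_Ioi_of_hasDerivAt_nonpos (fun t ht => (hg t ht).sub (hf t ht))
      fun t ht => by linarith [neg_abs_le (f' t), hle t ht]
  obtain ⟨Lg, hLg⟩ := hg_anti.exists_tendsto_atTop_of_bddBelow hg_bdd
  obtain ⟨c, hc⟩ := hg_bdd
  have hb : a < a + 1 := by linarith
  -- `f + g = (f - g) + 2 g` is bounded below beyond `a + 1`, where `f - g` is increasing
  have hadd_bdd : BddBelow ((f + g) '' Ioi (a + 1)) := by
    refine ⟨f (a + 1) - g (a + 1) + 2 * c, ?_⟩
    rintro _ ⟨t, ht, rfl⟩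
    have hta : t ∈ Ioi a := lt_trans hb ht
    have hsub : g t - f t ≤ g (a + 1) - f (a + 1) := hsub_anti hb hta ht.le
    have hgt : c ≤ g t := hc ⟨t, hta, rfl⟩
    change _ ≤ f t + g t
    linarith
  obtain ⟨Ls, hLs⟩ := (hadd_anti.mono (Ioi_subset_Ioi hb.le)).exists_tendsto_atTop_of_bddBelow
    hadd_bdd
  exact ⟨Ls - Lg, by simpa using hLs.sub hLg⟩

theorem exists_tendsto_inv_sum_smul_of_tendsto_log_sub_log {ι : Type*} [Fintype ι]
    {v : ℝ → ι → ℝ} (hpos : ∀ᶠ t in atTop, ∀ i, 0 < v t i)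
    (hlog : ∀ i j, ∃ L, Tendsto (fun t => Real.log (v t j) - Real.log (v t i)) atTop (𝓝 L)) :
    ∃ L : ι → ℝ, Tendsto (fun t => (∑ i, v t i)⁻¹ • v t) atTop (𝓝 L) := by
  choose L hL using hlog
  refine ⟨fun i => (∑ j, Real.exp (L i j))⁻¹, tendsto_pi_nhds.2 fun i => ?_⟩
  have hsum : Tendsto (fun t => ∑ j, Real.exp (Real.log (v t j) - Real.log (v t i))) atTop
      (𝓝 (∑ j, Real.exp (L i j))) :=
    tendsto_finsetSum _ fun j _ => (Real.continuous_exp.tendsto _).comp (hL i j)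
  have hsum_pos : 0 < ∑ j, Real.exp (L i j) :=
    Finset.sum_pos (fun j _ => Real.exp_pos _) ⟨i, Finset.mem_univ i⟩
  refine (hsum.inv₀ hsum_pos.ne').congr' ?_
  filter_upwards [hpos] with t ht
  simp only [Real.exp_sub, Real.exp_log (ht _), Pi.smul_apply, smul_eq_mul, ← Finset.sum_div]
  field_simp

theorem l1norm_eq_sum_of_nonneg {k : ℕ} {v : Fin k → ℝ} (hv : ∀ i, 0 ≤ v i) :
    l1norm v = ∑ i, v i :=
  Finset.sum_congr rfl fun i _ => abs_of_nonneg (hv i)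

theorem vecMul_circ_kernelAt_apply {k : ℕ} (μ p : Fin k → ℝ) (κ : Matrix (Fin k) (Fin k) ℝ)
    (t : ℝ) (j : Fin k) :
    vecMul μ (circ (kernelAt κ t) p) j = (vecMul μ κ j + t * ∑ i, μ i) * p j := by
  simp only [vecMul, dotProduct, circ, kernelAt, Matrix.add_apply, Matrix.smul_apply, of_apply,
    smul_eq_mul, Finset.mul_sum, Finset.sum_mul, ← Finset.sum_add_distrib]
  exact Finset.sum_congr rfl fun i _ => by ring

theorem abs_vecMul_sub_vecMul_le {ι : Type*} [Fintype ι] {μ : ι → ℝ} (h0 : ∀ l, 0 ≤ μ l)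
    (h1 : ∀ l, μ l ≤ 1) (κ : Matrix ι ι ℝ) (i j : ι) :
    |vecMul μ κ j - vecMul μ κ i| ≤ ∑ l, |κ l j - κ l i| := by
  simp only [vecMul, dotProduct, ← Finset.sum_sub_distrib, ← mul_sub]
  refine (Finset.abs_sum_le_sum_abs _ _).trans (Finset.sum_le_sum fun l _ => ?_)
  rw [abs_mul, abs_of_nonneg (h0 l)]
  exact mul_le_of_le_one_left (abs_nonneg _) (h1 l)

namespace IsTypeFlow

variable {k : ℕ} {κ : Matrix (Fin k) (Fin k) ℝ} {π : ℝ → Fin k → ℝ} {tc : ℝ} {φ : ℝ → ℝ}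
  {t : ℝ}

theorem exists_hasDerivAt (hπ : IsTypeFlow κ π tc φ) (ht : tc < t) :
    ∃ μ : Fin k → ℝ, (∀ i, 0 < μ i) ∧ ∑ i, μ i = 1 ∧
      (∀ j, π t j * (vecMul μ κ j + t) = μ j) ∧ HasDerivAt π (-(φ t) • μ) t := by
  obtain ⟨μ, hμ_pos, hμ_norm, hμ_eig, hderiv⟩ := hπ.flowDE t ht
  have hμ_sum : ∑ i, μ i = 1 := by rwa [← l1norm_eq_sum_of_nonneg fun i => (hμ_pos i).le]
  refine ⟨μ, hμ_pos, hμ_sum, fun j => ?_, hderiv⟩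
  have hj := congrFun hμ_eig j
  rw [vecMul_circ_kernelAt_apply, hμ_sum] at hj
  linarith

theorem pos (hπ : IsTypeFlow κ π tc φ) (ht : tc < t) (j : Fin k) : 0 < π t j := by
  obtain ⟨μ, hμ_pos, -, hμ_eig, -⟩ := hπ.exists_hasDerivAt ht
  have hnonneg := hπ.nonneg t (hπ.tc_nonneg.trans ht.le) j
  refine hnonneg.lt_of_ne fun h => ?_
  have hj := hμ_eig j
  rw [← h, zero_mul] at hj
  exact (hμ_pos j).ne hj

theorem hasDerivAt_sum (hπ : IsTypeFlow κ π tc φ) (ht : tc < t) :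
    HasDerivAt (fun s => ∑ j, π s j) (-φ t) t := by
  obtain ⟨μ, -, hμ_sum, -, hderiv⟩ := hπ.exists_hasDerivAt ht
  have := HasDerivAt.fun_sum fun j (_ : j ∈ Finset.univ) => hasDerivAt_pi.1 hderiv j
  simpa [← Finset.mul_sum, hμ_sum] using this

theorem exists_hasDerivAt_log (hπ : IsTypeFlow κ π tc φ) (ht : tc < t) :
    ∃ μ : Fin k → ℝ, (∀ i, 0 < μ i) ∧ ∑ i, μ i = 1 ∧
      ∀ j, HasDerivAt (fun s => Real.log (π s j)) (-φ t * (vecMul μ κ j + t)) t := by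
  obtain ⟨μ, hμ_pos, hμ_sum, hμ_eig, hderiv⟩ := hπ.exists_hasDerivAt ht
  refine ⟨μ, hμ_pos, hμ_sum, fun j => ?_⟩
  have hne := (hπ.pos ht j).ne'
  convert (hasDerivAt_pi.1 hderiv j).log hne using 1
  rw [Pi.smul_apply, smul_eq_mul, ← hμ_eig j]
  field_simp

theorem hasDerivAt_log_sub_log (hπ : IsTypeFlow κ π tc φ) (ht : tc < t) (i j : Fin k) :
    ∃ d, HasDerivAt (fun s => Real.log (π s j) - Real.log (π s i)) d t ∧
      |d| ≤ (∑ l, |κ l j - κ l i|) * φ t := by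
  obtain ⟨μ, hμ_pos, hμ_sum, hlog⟩ := hπ.exists_hasDerivAt_log ht
  refine ⟨_, (hlog j).sub (hlog i), ?_⟩
  have hμ_le : ∀ l, μ l ≤ 1 := fun l =>
    hμ_sum ▸ Finset.single_le_sum (fun l _ => (hμ_pos l).le) (Finset.mem_univ l)
  have hbound := abs_vecMul_sub_vecMul_le (fun l => (hμ_pos l).le) hμ_le κ i j
  rw [show -φ t * (vecMul μ κ j + t) - -φ t * (vecMul μ κ i + t)
      = -(φ t * (vecMul μ κ j - vecMul μ κ i)) by ring, abs_neg, abs_mul,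
    abs_of_pos (hπ.phi_pos t ht), mul_comm]
  exact mul_le_mul_of_nonneg_right hbound (hπ.phi_pos t ht).le

theorem exists_tendsto_log_sub_log (hπ : IsTypeFlow κ π tc φ) (i j : Fin k) :
    ∃ L, Tendsto (fun t => Real.log (π t j) - Real.log (π t i)) atTop (𝓝 L) := by
  set C := ∑ l, |κ l j - κ l i|
  choose! d hd hd_le using fun t (ht : tc < t) => hπ.hasDerivAt_log_sub_log ht i j
  refine exists_tendsto_of_abs_deriv_le_neg_deriv (g := fun t => C * ∑ l, π t l)
    (g' := fun t => C * -φ t) hd (fun t ht => (hπ.hasDerivAt_sum ht).const_mul C)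
    (fun t ht => by simpa using hd_le t ht) ⟨0, ?_⟩
  rintro _ ⟨t, ht, rfl⟩
  exact mul_nonneg (Finset.sum_nonneg fun l _ => abs_nonneg _)
    (Finset.sum_nonneg fun l _ => (hπ.pos ht l).le)

end IsTypeFlow

theorem frozen_percolation_type_flow_ratio_limit_exists_general
    {k : ℕ} (κ : Matrix (Fin k) (Fin k) ℝ)
    (π : ℝ → Fin k → ℝ) (tc : ℝ) (φ : ℝ → ℝ) (hπ : IsTypeFlow κ π tc φ) :
    ∃ L : Fin k → ℝ,
      Filter.Tendsto (fun t => (l1norm (π t))⁻¹ • π t) Filter.atTop (nhds L) := by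
  have hpos : ∀ᶠ t in atTop, ∀ i, 0 < π t i :=
    (eventually_gt_atTop tc).mono fun t ht => hπ.pos ht
  obtain ⟨L, hL⟩ := exists_tendsto_inv_sum_smul_of_tendsto_log_sub_log hpos
    hπ.exists_tendsto_log_sub_log
  refine ⟨L, hL.congr' ?_⟩
  filter_upwards [hpos] with t ht
  rw [l1norm_eq_sum_of_nonneg fun i => (ht i).le]

/-- Proposition 6.3 (limexistsprop): for any frozen percolation type flow,
π(t)/Φ(t) converges as t → ∞. -/
theorem frozen_percolation_type_flow_ratio_limit_exists
    {k : ℕ} (hk : 0 < k) (κ : Matrix (Fin k) (Fin k) ℝ) (hκ : IsKernel κ)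
    (π : ℝ → Fin k → ℝ) (tc : ℝ) (φ : ℝ → ℝ) (hπ : IsTypeFlow κ π tc φ)
    (hπ0pos : ∀ i, 0 < π 0 i) :
    ∃ L : Fin k → ℝ,
      Filter.Tendsto (fun t => (l1norm (π t))⁻¹ • π t) Filter.atTop (nhds L) :=
  frozen_percolation_type_flow_ratio_limit_exists_general κ π tc φ hπ
end

section
/- For all real numbers 0 < η < T < ∞ there exists a constant C < ∞ such that: for all k×k real matrices A and A' with every entry in the interval [η,T], and all vectors μ, μ' ∈ ℝ^k with strictly positive entries and ‖μ‖₁ = ‖μ'‖₁ = 1 satisfying μA = rμ and μ'A' = r'μ' for some real numbers r, r' > 0, one has ‖μ − μ'‖₁ ≤ C · max_{i,j∈[k]} |A_{i,j} − A'_{i,j}|. -/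
open Matrix

/-- `B ∈ B_θ(A)`: `B` has strictly positive entries and each entry differs from
the corresponding entry of `A` by at most `θ`. -/
def memBall {k : ℕ} (θ : ℝ) (A B : Matrix (Fin k) (Fin k) ℝ) : Prop :=
  (∀ i j, 0 < B i j) ∧ ∀ i j, |B i j - A i j| ≤ θ

/-!
Let `a = min μᵢ/μ'ᵢ`, `b = max μᵢ/μ'ᵢ` and `δ = maxᵢⱼ |Aᵢⱼ - A'ᵢⱼ|`; then `a ≤ 1 ≤ b` and
`‖μ - μ'‖₁ ≤ 2 (1 - a)`. Since every entry of `A` lies in `[η, T]`, applying `A` shrinks the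
ratio range (a Doeblin-type minorisation): `μA` lies between `(a + (η/T)(1 - a)) μ'A` and
`(b - (η/T)(b - 1)) μ'A`. On the other hand `μA = rμ`, and `μ'A` is within `δ` of
`μ'A' = r'μ'`, a vector with entries at least `η`. Comparing the two descriptions at the
indices where the minimum and the maximum ratio are attained, the unknown factor `r'/r`
cancels and leaves `η² (b - a) ≤ 2 T δ b`, hence `η² (1 - a) ≤ 2 T δ`.
-/

open Finset

section PositiveMatrix

variable {ι : Type*} [Fintype ι] {A A' : Matrix ι ι ℝ} {x y : ι → ℝ} {η T δ a b r r' : ℝ}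

lemma le_vecMul_apply (hA : ∀ i j, η ≤ A i j) (hx : 0 ≤ x) (j : ι) :
    η * ∑ i, x i ≤ vecMul x A j := by
  rw [mul_sum]
  exact sum_le_sum fun i _ => by rw [mul_comm]; exact mul_le_mul_of_nonneg_left (hA i j) (hx i)

lemma vecMul_apply_le (hA : ∀ i j, A i j ≤ T) (hx : 0 ≤ x) (j : ι) :
    vecMul x A j ≤ T * ∑ i, x i := by
  rw [mul_sum]
  exact sum_le_sum fun i _ => by rw [mul_comm T]; exact mul_le_mul_of_nonneg_left (hA i j) (hx i)

lemma abs_vecMul_apply_sub_le (hδ : ∀ i j, |A i j - A' i j| ≤ δ) (hx : 0 ≤ x) (j : ι) :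
    |vecMul x A j - vecMul x A' j| ≤ δ * ∑ i, x i := by
  rw [← Pi.sub_apply, ← vecMul_sub, abs_le]
  constructor
  · simpa [neg_mul] using le_vecMul_apply (A := A - A') (fun i j => (abs_le.1 (hδ i j)).1) hx j
  · exact vecMul_apply_le (A := A - A') (fun i j => (abs_le.1 (hδ i j)).2) hx j

lemma le_one_of_forall_mul_le (hx : ∑ i, x i = 1) (hy : ∑ i, y i = 1)
    (hxy : ∀ i, a * y i ≤ x i) : a ≤ 1 := by
  simpa [← mul_sum, hx, hy] using sum_le_sum fun i (_ : i ∈ univ) => hxy i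

lemma one_le_of_forall_le_mul (hx : ∑ i, x i = 1) (hy : ∑ i, y i = 1)
    (hxy : ∀ i, x i ≤ b * y i) : 1 ≤ b := by
  simpa [← mul_sum, hx, hy] using sum_le_sum fun i (_ : i ∈ univ) => hxy i

lemma doeblin_vecMul_lower (hη : 0 ≤ η) (hA : ∀ i j, A i j ∈ Set.Icc η T)
    (hx : ∑ i, x i = 1) (hy0 : 0 ≤ y) (hy : ∑ i, y i = 1) (hxy : ∀ i, a * y i ≤ x i) (j : ι) :
    (T * a + η * (1 - a)) * vecMul y A j ≤ T * vecMul x A j := by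
  have hT : 0 ≤ T := hη.trans ((hA j j).1.trans (hA j j).2)
  have ha : a ≤ 1 := le_one_of_forall_mul_le hx hy hxy
  have hgap : η * (1 - a) ≤ vecMul (x - a • y) A j := by
    have h := le_vecMul_apply (x := x - a • y) (fun i j => (hA i j).1)
      (fun i => by simpa using hxy i) j
    simpa [sum_sub_distrib, ← mul_sum, hx, hy] using h
  have hyA : vecMul y A j ≤ T := by
    simpa [hy] using vecMul_apply_le (fun i j => (hA i j).2) hy0 j
  have hsplit : vecMul x A j = a * vecMul y A j + vecMul (x - a • y) A j := by
    simp [sub_vecMul, smul_vecMul]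
  nlinarith [mul_le_mul_of_nonneg_left hgap hT, mul_le_mul_of_nonneg_left hyA
    (mul_nonneg hη (sub_nonneg.2 ha))]

lemma doeblin_vecMul_upper (hη : 0 ≤ η) (hA : ∀ i j, A i j ∈ Set.Icc η T)
    (hx : ∑ i, x i = 1) (hy0 : 0 ≤ y) (hy : ∑ i, y i = 1) (hxy : ∀ i, x i ≤ b * y i) (j : ι) :
    T * vecMul x A j ≤ (T * b - η * (b - 1)) * vecMul y A j := by
  have hT : 0 ≤ T := hη.trans ((hA j j).1.trans (hA j j).2)
  have hb : 1 ≤ b := one_le_of_forall_le_mul hx hy hxy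
  have hgap : η * (b - 1) ≤ vecMul (b • y - x) A j := by
    have h := le_vecMul_apply (x := b • y - x) (fun i j => (hA i j).1)
      (fun i => by simpa using hxy i) j
    simpa [sum_sub_distrib, ← mul_sum, hx, hy] using h
  have hyA : vecMul y A j ≤ T := by
    simpa [hy] using vecMul_apply_le (fun i j => (hA i j).2) hy0 j
  have hsplit : vecMul x A j = b * vecMul y A j - vecMul (b • y - x) A j := by
    simp [sub_vecMul, smul_vecMul]
  nlinarith [mul_le_mul_of_nonneg_left hgap hT, mul_le_mul_of_nonneg_left hyA
    (mul_nonneg hη (sub_nonneg.2 hb))]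

lemma mul_abs_vecMul_apply_sub_eigen_le (hη : 0 ≤ η) (hA' : ∀ i j, η ≤ A' i j)
    (hδ : ∀ i j, |A i j - A' i j| ≤ δ) (hy0 : 0 ≤ y) (hy : ∑ i, y i = 1)
    (hyA' : vecMul y A' = r' • y) (j : ι) :
    η * |vecMul y A j - r' * y j| ≤ δ * (r' * y j) := by
  have hr'y : η ≤ r' * y j := by
    simpa [hy, hyA'] using le_vecMul_apply hA' hy0 j
  have hdiff : |vecMul y A j - r' * y j| ≤ δ := by
    simpa [hy, hyA'] using abs_vecMul_apply_sub_le hδ hy0 j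
  have hδ0 : 0 ≤ δ := (abs_nonneg _).trans hdiff
  calc η * |vecMul y A j - r' * y j| ≤ η * δ := by gcongr
    _ ≤ δ * (r' * y j) := by rw [mul_comm]; exact mul_le_mul_of_nonneg_left hr'y hδ0

lemma exists_min_ratio [Nonempty ι] (hy : ∀ i, 0 < y i) :
    ∃ a i, x i = a * y i ∧ ∀ j, a * y j ≤ x j := by
  obtain ⟨i, hi⟩ := Finite.exists_min fun j => x j / y j
  exact ⟨x i / y i, i, (div_mul_cancel₀ _ (hy i).ne').symm,
    fun j => (le_div_iff₀ (hy j)).1 (hi j)⟩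

lemma exists_max_ratio [Nonempty ι] (hy : ∀ i, 0 < y i) :
    ∃ b i, x i = b * y i ∧ ∀ j, x j ≤ b * y j := by
  obtain ⟨i, hi⟩ := Finite.exists_max fun j => x j / y j
  exact ⟨x i / y i, i, (div_mul_cancel₀ _ (hy i).ne').symm,
    fun j => (div_le_iff₀ (hy j)).1 (hi j)⟩

variable (hη : 0 ≤ η) (hA : ∀ i j, A i j ∈ Set.Icc η T) (hA' : ∀ i j, η ≤ A' i j)
  (hδ : ∀ i j, |A i j - A' i j| ≤ δ) (hx : ∑ i, x i = 1) (hy0 : ∀ i, 0 < y i)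
  (hy : ∑ i, y i = 1) (hxA : vecMul x A = r • x) (hyA' : vecMul y A' = r' • y)
include hη hA hA' hδ hx hy0 hy hxA hyA'

lemma eigen_bound_at_min_ratio (hx0 : 0 ≤ x) (hxy : ∀ i, a * y i ≤ x i) {i : ι}
    (hi : x i = a * y i) :
    (T * a + η * (1 - a)) * ((η - δ) * r') ≤ η * T * r * a := by
  have hdoe := doeblin_vecMul_lower hη hA hx (fun j => (hy0 j).le) hy hxy i
  rw [hxA, Pi.smul_apply, smul_eq_mul, hi] at hdoe
  have hpert : (η - δ) * (r' * y i) ≤ η * vecMul y A i := by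
    have h := mul_abs_vecMul_apply_sub_eigen_le hη hA' hδ (fun j => (hy0 j).le) hy hyA' i
    nlinarith [mul_le_mul_of_nonneg_left (neg_abs_le (vecMul y A i - r' * y i)) hη]
  have ha0 : 0 ≤ a := nonneg_of_mul_nonneg_left (hi ▸ hx0 i) (hy0 i)
  have ha1 : a ≤ 1 := le_one_of_forall_mul_le hx hy hxy
  have hα : 0 ≤ T * a + η * (1 - a) := by nlinarith [(hA i i).1.trans (hA i i).2]
  refine le_of_mul_le_mul_right ?_ (hy0 i)
  calc (T * a + η * (1 - a)) * ((η - δ) * r') * y i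
      = (T * a + η * (1 - a)) * ((η - δ) * (r' * y i)) := by ring
    _ ≤ (T * a + η * (1 - a)) * (η * vecMul y A i) := mul_le_mul_of_nonneg_left hpert hα
    _ = η * ((T * a + η * (1 - a)) * vecMul y A i) := by ring
    _ ≤ η * (T * (r * (a * y i))) := mul_le_mul_of_nonneg_left hdoe hη
    _ = η * T * r * a * y i := by ring

lemma eigen_bound_at_max_ratio (hxy : ∀ i, x i ≤ b * y i) {i : ι} (hi : x i = b * y i) :
    η * T * r * b ≤ (T * b - η * (b - 1)) * ((η + δ) * r') := by
  have hdoe := doeblin_vecMul_upper hη hA hx (fun j => (hy0 j).le) hy hxy i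
  rw [hxA, Pi.smul_apply, smul_eq_mul, hi] at hdoe
  have hpert : η * vecMul y A i ≤ (η + δ) * (r' * y i) := by
    have h := mul_abs_vecMul_apply_sub_eigen_le hη hA' hδ (fun j => (hy0 j).le) hy hyA' i
    nlinarith [mul_le_mul_of_nonneg_left (le_abs_self (vecMul y A i - r' * y i)) hη]
  have hb1 : 1 ≤ b := one_le_of_forall_le_mul hx hy hxy
  have hβ : 0 ≤ T * b - η * (b - 1) := by nlinarith [(hA i i).1.trans (hA i i).2]
  refine le_of_mul_le_mul_right ?_ (hy0 i)
  calc η * T * r * b * y i = η * (T * (r * (b * y i))) := by ring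
    _ ≤ η * ((T * b - η * (b - 1)) * vecMul y A i) := mul_le_mul_of_nonneg_left hdoe hη
    _ = (T * b - η * (b - 1)) * (η * vecMul y A i) := by ring
    _ ≤ (T * b - η * (b - 1)) * ((η + δ) * (r' * y i)) := mul_le_mul_of_nonneg_left hpert hβ
    _ = (T * b - η * (b - 1)) * ((η + δ) * r') * y i := by ring

end PositiveMatrix

lemma sq_mul_one_sub_le_of_ratio_bounds {η T δ a b r r' : ℝ} (hη : 0 < η) (hηT : η ≤ T)
    (hδ : 0 ≤ δ) (ha0 : 0 ≤ a) (ha1 : a ≤ 1) (hb1 : 1 ≤ b) (hr : 0 < r) (hr' : 0 < r')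
    (hmin : (T * a + η * (1 - a)) * ((η - δ) * r') ≤ η * T * r * a)
    (hmax : η * T * r * b ≤ (T * b - η * (b - 1)) * ((η + δ) * r')) :
    η ^ 2 * (1 - a) ≤ 2 * T * δ := by
  have hb0 : 0 < b := by linarith
  set α := T * a + η * (1 - a)
  set β := T * b - η * (b - 1)
  have hα : α ≤ T := by nlinarith
  have hβ : 0 ≤ β := by nlinarith
  have hβb : a * β ≤ T * b := by nlinarith
  have hcross : α * (η - δ) * b ≤ a * β * (η + δ) := by
    have hT : 0 < T := hη.trans_le hηT
    have hprod := mul_le_mul hmin hmax (by positivity) (by positivity)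
    refine le_of_mul_le_mul_right ?_ (by positivity : 0 < η * T * r * r')
    linarith
  have hexpand : η ^ 2 * (b - a) = α * (η - δ) * b - a * β * (η + δ) + δ * (α * b + a * β) := by
    ring
  have hgap_le : η ^ 2 * (b - a) ≤ 2 * T * δ * b := by
    nlinarith [mul_le_mul_of_nonneg_left hα (mul_nonneg hδ hb0.le),
      mul_le_mul_of_nonneg_left hβb hδ]
  have hsplit : η ^ 2 * (1 - a) * b ≤ η ^ 2 * (b - a) := by
    nlinarith [mul_nonneg (mul_nonneg (sq_nonneg η) ha0) (sub_nonneg.2 hb1)]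
  exact le_of_mul_le_mul_right (hsplit.trans hgap_le) hb0

lemma l1norm_eq_sum {k : ℕ} {x : Fin k → ℝ} (hx : 0 ≤ x) : l1norm x = ∑ i, x i :=
  sum_congr rfl fun i _ => abs_of_nonneg (hx i)

lemma l1norm_sub_le_two_mul_one_sub {k : ℕ} {x y : Fin k → ℝ} {a : ℝ} (hx : ∑ i, x i = 1)
    (hy0 : 0 ≤ y) (hy : ∑ i, y i = 1) (hxy : ∀ i, a * y i ≤ x i) :
    l1norm (x - y) ≤ 2 * (1 - a) := by
  have ha := le_one_of_forall_mul_le hx hy hxy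
  have habs : ∀ i, |x i - y i| ≤ (x i - y i) + 2 * (1 - a) * y i := fun i => by
    rcases abs_cases (x i - y i) with ⟨heq, hsign⟩ | ⟨heq, hsign⟩ <;>
      nlinarith [hxy i, mul_nonneg (sub_nonneg.2 ha) (hy0 i)]
  calc l1norm (x - y) ≤ ∑ i, ((x i - y i) + 2 * (1 - a) * y i) := sum_le_sum fun i _ => habs i
    _ = 2 * (1 - a) := by simp [sum_add_distrib, sum_sub_distrib, ← mul_sum, hx, hy]

theorem principal_eigenvector_lipschitz_general
    {k : ℕ} (η T : ℝ) (hη : 0 < η) :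
    ∃ C : ℝ, ∀ A A' : Matrix (Fin k) (Fin k) ℝ,
      (∀ i j, A i j ∈ Set.Icc η T) → (∀ i j, A' i j ∈ Set.Icc η T) →
      ∀ (μ μ' : Fin k → ℝ) (r r' : ℝ),
        (∀ i, 0 < μ i) → l1norm μ = 1 → 0 < r → Matrix.vecMul μ A = r • μ →
        (∀ i, 0 < μ' i) → l1norm μ' = 1 → 0 < r' → Matrix.vecMul μ' A' = r' • μ' →
        l1norm (μ - μ') ≤ C * ⨆ i, ⨆ j, |A i j - A' i j| := by
  refine ⟨4 * T / η ^ 2, fun A A' hA hA' μ μ' r r' hμ hμ1 hr hμA hμ' hμ'1 hr' hμ'A' => ?_⟩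
  set δ := ⨆ i, ⨆ j, |A i j - A' i j|
  have hδ : ∀ i j, |A i j - A' i j| ≤ δ := fun i j =>
    (le_ciSup (f := fun j => |A i j - A' i j|) (Set.finite_range _).bddAbove j).trans
      (le_ciSup (f := fun i => ⨆ j, |A i j - A' i j|) (Set.finite_range _).bddAbove i)
  rw [l1norm_eq_sum fun i => (hμ i).le] at hμ1
  rw [l1norm_eq_sum fun i => (hμ' i).le] at hμ'1
  have : Nonempty (Fin k) := univ_nonempty_iff.1 (nonempty_of_sum_ne_zero (hμ1 ▸ one_ne_zero))
  obtain ⟨a, ia, hia, ha⟩ := exists_min_ratio (x := μ) hμ'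
  obtain ⟨b, ib, hib, hb⟩ := exists_max_ratio (x := μ) hμ'
  have hgap : η ^ 2 * (1 - a) ≤ 2 * T * δ :=
    sq_mul_one_sub_le_of_ratio_bounds hη ((hA ia ia).1.trans (hA ia ia).2)
      ((abs_nonneg _).trans (hδ ia ia))
      (nonneg_of_mul_nonneg_left (hia ▸ (hμ ia).le) (hμ' ia))
      (le_one_of_forall_mul_le hμ1 hμ'1 ha) (one_le_of_forall_le_mul hμ1 hμ'1 hb) hr hr'
      (eigen_bound_at_min_ratio hη.le hA (fun i j => (hA' i j).1) hδ hμ1 hμ' hμ'1 hμA hμ'A'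
        (fun i => (hμ i).le) ha hia)
      (eigen_bound_at_max_ratio hη.le hA (fun i j => (hA' i j).1) hδ hμ1 hμ' hμ'1 hμA hμ'A'
        hb hib)
  calc l1norm (μ - μ') ≤ 2 * (1 - a) :=
        l1norm_sub_le_two_mul_one_sub hμ1 (fun i => (hμ' i).le) hμ'1 ha
    _ ≤ 4 * T / η ^ 2 * δ := by
        rw [div_mul_eq_mul_div, le_div_iff₀ (by positivity)]
        linarith

/-- Lemma (muLipprop1): uniform Lipschitz continuity of the normalised principal
left-eigenvector on matrices with entries in [η,T]. -/
theorem principal_eigenvector_lipschitz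
    {k : ℕ} (hk : 0 < k) (η T : ℝ) (hη : 0 < η) (hηT : η < T) :
    ∃ C : ℝ, ∀ A A' : Matrix (Fin k) (Fin k) ℝ,
      (∀ i j, A i j ∈ Set.Icc η T) → (∀ i j, A' i j ∈ Set.Icc η T) →
      ∀ (μ μ' : Fin k → ℝ) (r r' : ℝ),
        (∀ i, 0 < μ i) → l1norm μ = 1 → 0 < r → Matrix.vecMul μ A = r • μ →
        (∀ i, 0 < μ' i) → l1norm μ' = 1 → 0 < r' → Matrix.vecMul μ' A' = r' • μ' →
        l1norm (μ - μ') ≤ C * ⨆ i, ⨆ j, |A i j - A' i j| :=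
  principal_eigenvector_lipschitz_general η T hη
end

section
/- Fix η, ε ∈ (0,1). There exists a constant M < ∞, depending only on η and k, such that: for every π ∈ Π_{≤1} with π_i ≥ η for all i ∈ [k], and every symmetric k×k matrix κ with all entries in [η,∞) satisfying ρ(κ∘π) ≤ 1 + ε, every vector ζ ∈ ℝ_{≥0}^k satisfying ζ_i = 1 − exp(−[(κ∘π)ζ]_i) for all i ∈ [k] satisfies Σ_{i∈[k]} π_i ζ_i ≤ Mε. -/
open Matrix

/-- `π ∈ Π_{≤1}`: a subdistribution on `[k]`. -/
def IsSubdist {k : ℕ} (π : Fin k → ℝ) : Prop :=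
  (∀ i, 0 ≤ π i) ∧ ∑ i, π i ≤ 1

/-!
Write `x = (κ∘π)ζ` and `D = diag(√π)`. As `κ∘π = (κD)D` and `DκD = D(κD)` have the same
characteristic polynomial, the symmetric matrix `DκD` has its spectrum below `ρ(κ∘π) ≤ 1 + ε`,
and its Rayleigh bound at `Dζ` reads `Σ πᵢ ζᵢ xᵢ ≤ (1 + ε) Σ πᵢ ζᵢ²`. Pointwise, `ζ = 1 - e^{-x}`
forces `ζ + ζ²/4 ≤ x`, so `Σ πᵢ ζᵢ³ ≤ 4ε Σ πᵢ ζᵢ²`. For the moments `sₙ = Σ πᵢ ζᵢⁿ`,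
Cauchy–Schwarz gives `s₂² ≤ s₁ s₃` and `s₁² ≤ s₂` (as `Σ πᵢ ≤ 1`), whence `s₁ ≤ 4ε`.
-/

theorem Matrix.ofReal_mem_spectrum_map {n : Type*} [Fintype n] [DecidableEq n]
    {A : Matrix n n ℝ} {μ : ℝ} (h : μ ∈ spectrum ℝ A) :
    (μ : ℂ) ∈ spectrum ℂ (A.map Complex.ofReal) := by
  rw [mem_spectrum_iff_isRoot_charpoly] at h ⊢
  rw [show A.map Complex.ofReal = A.map Complex.ofRealHom from rfl, charpoly_map]
  exact h.map

theorem abs_le_perronRoot {k : ℕ} {A : Matrix (Fin k) (Fin k) ℝ} {μ : ℝ}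
    (h : μ ∈ spectrum ℝ A) : |μ| ≤ perronRoot A := by
  have hbdd := ((A.map Complex.ofReal).finite_spectrum.image fun z : ℂ => ‖z‖).bddAbove
  simpa [perronRoot] using le_csSup hbdd ⟨_, ofReal_mem_spectrum_map h, rfl⟩

theorem circ_eq_mul_diagonal {k : ℕ} (A : Matrix (Fin k) (Fin k) ℝ) (v : Fin k → ℝ) :
    circ A v = A * diagonal v := by
  ext i j
  simp [circ, mul_diagonal]

theorem spectrum_diagonal_sqrt_mul_mul_diagonal_sqrt {k : ℕ} (κ : Matrix (Fin k) (Fin k) ℝ)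
    {π : Fin k → ℝ} (hπ : ∀ i, 0 ≤ π i) :
    spectrum ℝ (diagonal (fun i => √(π i)) * κ * diagonal (fun i => √(π i))) =
      spectrum ℝ (circ κ π) := by
  have hsq : diagonal (fun i => √(π i)) * diagonal (fun i => √(π i)) = diagonal π := by
    simp [diagonal_mul_diagonal, Real.mul_self_sqrt (hπ _)]
  ext μ
  rw [mem_spectrum_iff_isRoot_charpoly, mem_spectrum_iff_isRoot_charpoly, Matrix.mul_assoc,
    charpoly_mul_comm, Matrix.mul_assoc, hsq, circ_eq_mul_diagonal]

open scoped MatrixOrder in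
theorem Matrix.IsHermitian.dotProduct_mulVec_le {n : Type*} [Fintype n] [DecidableEq n]
    {S : Matrix n n ℝ} (hS : S.IsHermitian) {C : ℝ} (hC : ∀ μ ∈ spectrum ℝ S, μ ≤ C)
    (w : n → ℝ) : w ⬝ᵥ S *ᵥ w ≤ C * (w ⬝ᵥ w) := by
  have hle : S ≤ algebraMap ℝ _ C := le_algebraMap_of_spectrum_le hC hS.isSelfAdjoint
  have := (le_iff.mp hle).dotProduct_mulVec_nonneg w
  rwa [Algebra.algebraMap_eq_smul_one, star_trivial, sub_mulVec, smul_mulVec, one_mulVec,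
    dotProduct_sub, dotProduct_smul, smul_eq_mul, sub_nonneg] at this

theorem dotProduct_diagonal_sqrt_mul_mul_diagonal_sqrt_mulVec {k : ℕ}
    (κ : Matrix (Fin k) (Fin k) ℝ) {π : Fin k → ℝ} (hπ : ∀ i, 0 ≤ π i) (ζ : Fin k → ℝ) :
    (fun i => √(π i) * ζ i) ⬝ᵥ
        (diagonal (fun i => √(π i)) * κ * diagonal (fun i => √(π i))) *ᵥ
          (fun i => √(π i) * ζ i) =
      ∑ i, π i * ζ i * (circ κ π *ᵥ ζ) i := by
  have hπζ : diagonal (fun i => √(π i)) *ᵥ (fun i => √(π i) * ζ i) = fun i => π i * ζ i := by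
    ext i
    simp [mulVec_diagonal, ← mul_assoc, Real.mul_self_sqrt (hπ i)]
  rw [← mulVec_mulVec, ← mulVec_mulVec, dotProduct_mulVec, ← mulVec_transpose,
    diagonal_transpose, hπζ, circ_eq_mul_diagonal, ← mulVec_mulVec,
    show diagonal π *ᵥ ζ = fun i => π i * ζ i from funext (mulVec_diagonal π ζ)]
  rfl

theorem sum_mul_mul_circ_mulVec_le {k : ℕ} {κ : Matrix (Fin k) (Fin k) ℝ} (hκ : κ.IsSymm)
    {π : Fin k → ℝ} (hπ : ∀ i, 0 ≤ π i) (ζ : Fin k → ℝ) :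
    ∑ i, π i * ζ i * (circ κ π *ᵥ ζ) i ≤ perronRoot (circ κ π) * ∑ i, π i * ζ i ^ 2 := by
  have hS : (diagonal (fun i => √(π i)) * κ * diagonal (fun i => √(π i))).IsHermitian := by
    simp [IsHermitian, conjTranspose_eq_transpose_of_trivial, hκ.eq, Matrix.mul_assoc]
  have hspec : ∀ μ ∈ spectrum ℝ (diagonal (fun i => √(π i)) * κ * diagonal (fun i => √(π i))),
      μ ≤ perronRoot (circ κ π) := by
    intro μ hμ
    rw [spectrum_diagonal_sqrt_mul_mul_diagonal_sqrt κ hπ] at hμ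
    exact (le_abs_self μ).trans (abs_le_perronRoot hμ)
  have hnorm : (fun i => √(π i) * ζ i) ⬝ᵥ (fun i => √(π i) * ζ i) = ∑ i, π i * ζ i ^ 2 := by
    refine Finset.sum_congr rfl fun i _ => ?_
    rw [mul_mul_mul_comm, Real.mul_self_sqrt (hπ i), sq]
  rw [← dotProduct_diagonal_sqrt_mul_mul_diagonal_sqrt_mulVec κ hπ, ← hnorm]
  exact hS.dotProduct_mulVec_le hspec _

open Real in
theorem one_sub_exp_neg_add_sq_div_four_le {x : ℝ} (hx : 0 ≤ x) :
    (1 - exp (-x)) + (1 - exp (-x)) ^ 2 / 4 ≤ x := by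
  have hz0 : 0 ≤ 1 - exp (-x) := by simp [exp_le_one_iff, hx]
  have hz1 : 1 - exp (-x) ≤ 1 := by linarith [exp_pos (-x)]
  have hzx : 1 - exp (-x) ≤ x := by linarith [add_one_le_exp (-x)]
  rcases le_or_gt x 2 with hx2 | hx2
  · have hsq : (1 - x / 2) ^ 2 ≤ exp (-x) := by
      calc (1 - x / 2) ^ 2 ≤ exp (-(x / 2)) ^ 2 := by
            gcongr
            · linarith
            · linarith [add_one_le_exp (-(x / 2))]
        _ = exp (-x) := by rw [← exp_nat_mul]; ring_nf
    nlinarith [mul_le_mul hzx hzx hz0 hx]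
  · nlinarith

theorem sum_mul_le_of_sum_mul_pow_three_le {ι : Type*} [Fintype ι] {π ζ : ι → ℝ} {c : ℝ}
    (hπ : ∀ i, 0 ≤ π i) (hπ1 : ∑ i, π i ≤ 1) (hζ : ∀ i, 0 ≤ ζ i) (hc : 0 ≤ c)
    (h : ∑ i, π i * ζ i ^ 3 ≤ c * ∑ i, π i * ζ i ^ 2) : ∑ i, π i * ζ i ≤ c := by
  set s₁ := ∑ i, π i * ζ i
  set s₂ := ∑ i, π i * ζ i ^ 2
  set s₃ := ∑ i, π i * ζ i ^ 3
  have hs₁ : 0 ≤ s₁ := Finset.sum_nonneg fun i _ => mul_nonneg (hπ i) (hζ i)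
  have hs₂ : 0 ≤ s₂ := Finset.sum_nonneg fun i _ => mul_nonneg (hπ i) (pow_nonneg (hζ i) 2)
  have h₁₃ : s₂ ^ 2 ≤ s₁ * s₃ :=
    Finset.sum_sq_le_sum_mul_sum_of_sq_le_mul _
      (fun i _ => mul_nonneg (hπ i) (hζ i)) (fun i _ => mul_nonneg (hπ i) (pow_nonneg (hζ i) 3))
      (fun i _ => (by ring : _ = _).le)
  have h₀₂ : s₁ ^ 2 ≤ (∑ i, π i) * s₂ :=
    Finset.sum_sq_le_sum_mul_sum_of_sq_le_mul _
      (fun i _ => hπ i) (fun i _ => mul_nonneg (hπ i) (pow_nonneg (hζ i) 2))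
      (fun i _ => (by ring : _ = _).le)
  have h₂ : s₂ ≤ c * s₁ := by nlinarith [mul_le_mul_of_nonneg_left h hs₁, mul_nonneg hc hs₁]
  nlinarith [mul_le_mul_of_nonneg_right hπ1 hs₂]

theorem survival_probability_bound_general
    {k : ℕ} (η : ℝ) :
    ∃ M : ℝ, ∀ ε : ℝ, 0 < ε → ε < 1 →
      ∀ π : Fin k → ℝ, IsSubdist π → (∀ i, η ≤ π i) →
      ∀ κ : Matrix (Fin k) (Fin k) ℝ, κ.IsSymm → (∀ i j, η ≤ κ i j) →
        perronRoot (circ κ π) ≤ 1 + ε →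
      ∀ ζ : Fin k → ℝ, (∀ i, 0 ≤ ζ i) →
        (∀ i, ζ i = 1 - Real.exp (-((circ κ π).mulVec ζ i))) →
      ∑ i, π i * ζ i ≤ M * ε := by
  refine ⟨4, fun ε hε _ π hπ _ κ hκ _ hρ ζ hζ hfix => ?_⟩
  have hx : ∀ i, 0 ≤ (circ κ π *ᵥ ζ) i := fun i => by
    have : Real.exp (-(circ κ π *ᵥ ζ) i) ≤ 1 := by linarith [hζ i, hfix i]
    simpa using this
  have hpoint : ∀ i, ζ i + ζ i ^ 2 / 4 ≤ (circ κ π *ᵥ ζ) i := fun i => by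
    simpa only [← hfix i] using one_sub_exp_neg_add_sq_div_four_le (hx i)
  have hs₂ : 0 ≤ ∑ i, π i * ζ i ^ 2 :=
    Finset.sum_nonneg fun i _ => mul_nonneg (hπ.1 i) (pow_nonneg (hζ i) 2)
  have hcube : ∑ i, π i * ζ i ^ 3 ≤ 4 * ε * ∑ i, π i * ζ i ^ 2 := by
    have hlower : ∑ i, π i * ζ i * (ζ i + ζ i ^ 2 / 4) ≤ ∑ i, π i * ζ i * (circ κ π *ᵥ ζ) i :=
      Finset.sum_le_sum fun i _ => mul_le_mul_of_nonneg_left (hpoint i)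
        (mul_nonneg (hπ.1 i) (hζ i))
    have hupper := (sum_mul_mul_circ_mulVec_le hκ hπ.1 ζ).trans
      (mul_le_mul_of_nonneg_right hρ hs₂)
    have hsplit : ∑ i, π i * ζ i * (ζ i + ζ i ^ 2 / 4) =
        ∑ i, π i * ζ i ^ 2 + (∑ i, π i * ζ i ^ 3) / 4 := by
      rw [Finset.sum_div, ← Finset.sum_add_distrib]
      exact Finset.sum_congr rfl fun i _ => by ring
    linarith
  exact sum_mul_le_of_sum_mul_pow_three_le hπ.1 hπ.2 hζ (by positivity) hcube

/-- Lemma 5.5 (O1boundzeta): uniform O(ε) bound on survival probabilities of near-critical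
multitype Poisson branching processes. -/
theorem survival_probability_bound
    {k : ℕ} (hk : 0 < k) (η : ℝ) (hη0 : 0 < η) (hη1 : η < 1) :
    ∃ M : ℝ, ∀ ε : ℝ, 0 < ε → ε < 1 →
      ∀ π : Fin k → ℝ, IsSubdist π → (∀ i, η ≤ π i) →
      ∀ κ : Matrix (Fin k) (Fin k) ℝ, κ.IsSymm → (∀ i j, η ≤ κ i j) →
        perronRoot (circ κ π) ≤ 1 + ε →
      ∀ ζ : Fin k → ℝ, (∀ i, 0 ≤ ζ i) →
        (∀ i, ζ i = 1 - Real.exp (-((circ κ π).mulVec ζ i))) →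
      ∑ i, π i * ζ i ≤ M * ε :=
  survival_probability_bound_general η
end
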